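/- arXiv:1504.05758 — 2 statements merged into one kernel-verified Lean document; each statement's English description precedes it below -/
import Mathlib

section
/- For every N ≥ 1, the double integral ∫₀^N ∫₀^N sin²(π(x+y))/(π²(x+y)²) dx dy equals (1/(2π²))·log N·(1+o(1)) as N → ∞; more precisely, the difference between this integral and (1/(2π²))·log N is bounded by a constant independent of N. -/
/-!
Substituting `u = x + y`, the inner integral becomes `∫ u in x..x + N, g u` with
`g u = sin² (π u) / (π² u²) = (1 - cos (2π u)) / (2π² u²)`. The non-oscillating part integrates to
`(x⁻¹ - (x + N)⁻¹) / (2π²)`, and one integration by parts shows that the cosine part is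
`O(x⁻²)`. Integrating over `x ∈ [1, N]` gives `log ((N + 1) / 2) / (2π²) + O(1)`, the strip
`x ∈ [0, 1]` contributes `O(1)` because `g ≤ 1`, and `log ((N + 1) / 2) = log N + O(1)`.
-/

open MeasureTheory Real

lemma intervalIntegrable_of_continuousOn_Ioi {E : Type*} [NormedAddCommGroup E] {f : ℝ → E}
    {a b : ℝ} (hf : ContinuousOn f (Set.Ioi 0)) (ha : 0 < a) (hab : a ≤ b) :
    IntervalIntegrable f volume a b :=
  (hf.mono fun _ hx => ha.trans_le (Set.uIcc_of_le hab ▸ hx).1).intervalIntegrable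

lemma integral_inv_pow_add_two {a b : ℝ} (n : ℕ) (ha : 0 < a) (hab : a ≤ b) :
    ∫ u in a..b, (u ^ (n + 2))⁻¹ = ((a ^ (n + 1))⁻¹ - (b ^ (n + 1))⁻¹) / (n + 1) := by
  have h0 : (0 : ℝ) ∉ Set.uIcc a b := fun h => (ha.trans_le (Set.uIcc_of_le hab ▸ h).1).false
  have h := integral_zpow (a := a) (b := b) (n := -(n + 2 : ℕ)) (Or.inr ⟨by omega, h0⟩)
  have e : -((n + 2 : ℕ) : ℤ) + 1 = -((n + 1 : ℕ) : ℤ) := by push_cast; ring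
  have e' : (((-((n + 2 : ℕ) : ℤ) : ℤ) : ℝ) + 1) = -((n : ℝ) + 1) := by push_cast; ring
  simp only [zpow_neg, zpow_natCast, e, e'] at h
  rw [h, div_neg, ← neg_div, neg_sub]

lemma continuousOn_inv_pow_Ioi (n : ℕ) : ContinuousOn (fun u : ℝ => (u ^ n)⁻¹) (Set.Ioi 0) :=
  ContinuousOn.inv₀ (by fun_prop) fun _ hx => pow_ne_zero _ (ne_of_gt hx)

lemma abs_mul_sin_div_le {x c ω : ℝ} (hc : 0 ≤ c) (hω : 0 < ω) : |c * (sin x / ω)| ≤ c / ω := by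
  rw [abs_mul, abs_div, abs_of_nonneg hc, abs_of_pos hω, mul_div_assoc']
  gcongr
  exact mul_le_of_le_one_right hc (abs_sin_le_one x)

lemma abs_integral_cos_mul_div_sq_le {ω a b : ℝ} (hω : 0 < ω) (ha : 0 < a) (hab : a ≤ b) :
    |∫ u in a..b, cos (ω * u) / u ^ 2| ≤ 2 / (ω * a ^ 2) := by
  have hpos : ∀ u ∈ Set.uIcc a b, u ≠ 0 := fun u hu =>
    (ha.trans_le (Set.uIcc_of_le hab ▸ hu).1).ne'
  have hparts := intervalIntegral.integral_mul_deriv_eq_deriv_mul (a := a) (b := b)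
    (u := fun u => (u ^ 2)⁻¹) (u' := fun u => -(2 * (u ^ 3)⁻¹))
    (v := fun u => sin (ω * u) / ω) (v' := fun u => cos (ω * u))
    (fun u hu => ((hasDerivAt_pow 2 u).inv (pow_ne_zero 2 (hpos u hu))).congr_deriv
      (by field_simp [hpos u hu]; ring))
    (fun u _ => (((hasDerivAt_id u).const_mul ω).sin.div_const ω).congr_deriv
      (by field_simp [hω.ne']; simp))
    ((intervalIntegrable_of_continuousOn_Ioi (continuousOn_inv_pow_Ioi 3) ha hab).const_mul 2).neg
    (by apply Continuous.intervalIntegrable; fun_prop)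
  have hrest : |∫ u in a..b, -(2 * (u ^ 3)⁻¹) * (sin (ω * u) / ω)|
      ≤ ((a ^ 2)⁻¹ - (b ^ 2)⁻¹) / ω := by
    have := intervalIntegral.norm_integral_le_of_norm_le hab
      (f := fun u => -(2 * (u ^ 3)⁻¹) * (sin (ω * u) / ω)) (g := fun u => 2 / ω * (u ^ 3)⁻¹)
      (ae_of_all _ fun u hu => by
        have hu0 : 0 < u := ha.trans hu.1
        rw [Real.norm_eq_abs, neg_mul, abs_neg]
        exact (abs_mul_sin_div_le (by positivity) hω).trans_eq (by ring))
      ((intervalIntegrable_of_continuousOn_Ioi (continuousOn_inv_pow_Ioi 3) ha hab).const_mul _)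
    rw [intervalIntegral.integral_const_mul, integral_inv_pow_add_two 1 ha hab] at this
    refine (Real.norm_eq_abs _ ▸ this).trans_eq ?_
    norm_num
  have hcos : ∫ u in a..b, cos (ω * u) / u ^ 2 = ∫ u in a..b, (u ^ 2)⁻¹ * cos (ω * u) := by
    simp only [div_eq_inv_mul]
  rw [hcos, hparts]
  calc _ ≤ |(b ^ 2)⁻¹ * (sin (ω * b) / ω)| + |(a ^ 2)⁻¹ * (sin (ω * a) / ω)|
        + |∫ u in a..b, -(2 * (u ^ 3)⁻¹) * (sin (ω * u) / ω)| :=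
        (abs_sub _ _).trans (add_le_add (abs_sub _ _) le_rfl)
    _ ≤ (b ^ 2)⁻¹ / ω + (a ^ 2)⁻¹ / ω + ((a ^ 2)⁻¹ - (b ^ 2)⁻¹) / ω := by
        gcongr
        · exact abs_mul_sin_div_le (by positivity) hω
        · exact abs_mul_sin_div_le (by positivity) hω
    _ = 2 / (ω * a ^ 2) := by field_simp; ring

/-- At `u = 0` this is `0 / 0 = 0` rather than the limit `1`, so the function is bounded but not
continuous. -/
noncomputable def sineKernelSq (u : ℝ) : ℝ := sin (π * u) ^ 2 / (π ^ 2 * u ^ 2)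

lemma sineKernelSq_eq (u : ℝ) :
    sineKernelSq u = ((u ^ 2)⁻¹ - cos (2 * π * u) / u ^ 2) / (2 * π ^ 2) := by
  rw [sineKernelSq, sin_sq_eq_half_sub, ← mul_assoc]
  simp only [div_eq_mul_inv, mul_inv]
  ring

lemma sineKernelSq_nonneg (u : ℝ) : 0 ≤ sineKernelSq u := by
  unfold sineKernelSq; positivity

lemma sineKernelSq_le_one (u : ℝ) : sineKernelSq u ≤ 1 := by
  rcases eq_or_ne u 0 with rfl | hu
  · simp [sineKernelSq]
  · rw [sineKernelSq, div_le_one (by positivity), ← mul_pow]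
    exact sin_sq_le_sq

lemma measurable_sineKernelSq : Measurable sineKernelSq := by
  unfold sineKernelSq; fun_prop

lemma intervalIntegrable_sineKernelSq (a b : ℝ) : IntervalIntegrable sineKernelSq volume a b :=
  (intervalIntegrable_const (c := (1 : ℝ))).mono_fun measurable_sineKernelSq.aestronglyMeasurable
    (ae_of_all _ fun u => by
      simpa [abs_of_nonneg (sineKernelSq_nonneg u)] using sineKernelSq_le_one u)

lemma continuous_integral_sineKernelSq_add (N : ℝ) :
    Continuous fun x => ∫ u in x..x + N, sineKernelSq u := by
  have hF := intervalIntegral.continuous_primitive intervalIntegrable_sineKernelSq 0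
  have hdiff : (fun x => ∫ u in x..x + N, sineKernelSq u) =
      fun x => (∫ u in 0..x + N, sineKernelSq u) - ∫ u in 0..x, sineKernelSq u :=
    funext fun x => (intervalIntegral.integral_interval_sub_left
      (intervalIntegrable_sineKernelSq 0 _) (intervalIntegrable_sineKernelSq 0 _)).symm
  rw [hdiff]
  exact (hF.comp (continuous_add_const N)).sub hF

lemma abs_integral_sineKernelSq_sub_le {a b : ℝ} (ha : 0 < a) (hab : a ≤ b) :
    |(∫ u in a..b, sineKernelSq u) - (a⁻¹ - b⁻¹) / (2 * π ^ 2)| ≤ (a ^ 2)⁻¹ := by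
  have hinv := intervalIntegrable_of_continuousOn_Ioi (continuousOn_inv_pow_Ioi 2) ha hab
  have hcos : IntervalIntegrable (fun u => cos (2 * π * u) / u ^ 2) volume a b :=
    intervalIntegrable_of_continuousOn_Ioi
      (ContinuousOn.div (by fun_prop) (by fun_prop) fun _ hx => pow_ne_zero _ (ne_of_gt hx)) ha hab
  simp only [sineKernelSq_eq]
  rw [intervalIntegral.integral_div, intervalIntegral.integral_sub hinv hcos,
    integral_inv_pow_add_two 0 ha hab]
  have hosc := abs_integral_cos_mul_div_sq_le (by positivity : 0 < 2 * π) ha hab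
  calc _ = |∫ u in a..b, cos (2 * π * u) / u ^ 2| / (2 * π ^ 2) := by
        rw [← abs_of_pos (by positivity : (0:ℝ) < 2 * π ^ 2), ← abs_div, ← abs_neg]
        congr 1; simp; ring
    _ ≤ 2 / (2 * π * a ^ 2) / (2 * π ^ 2) := by gcongr
    _ = (a ^ 2)⁻¹ / (2 * π ^ 3) := by field_simp
    _ ≤ (a ^ 2)⁻¹ := div_le_self (by positivity)
        (by nlinarith [pow_le_pow_left₀ zero_le_three pi_gt_three.le 3])

lemma integral_sineKernelSq_le_two {a b : ℝ} (ha : 1 ≤ a) (hab : a ≤ b) :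
    ∫ u in a..b, sineKernelSq u ≤ 2 := by
  have ha0 : 0 < a := one_pos.trans_le ha
  have htail := (abs_le.1 (abs_integral_sineKernelSq_sub_le ha0 hab)).2
  have hmain : (a⁻¹ - b⁻¹) / (2 * π ^ 2) ≤ 1 := by
    have h2π : 1 ≤ 2 * π ^ 2 := by nlinarith [pi_gt_three]
    have hb : 0 ≤ b⁻¹ := inv_nonneg.2 (ha0.le.trans hab)
    calc _ ≤ a⁻¹ - b⁻¹ := div_le_self (by linarith [inv_anti₀ ha0 hab]) h2π
      _ ≤ 1 := by linarith [inv_le_one_of_one_le₀ ha]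
  have herr : (a ^ 2)⁻¹ ≤ 1 := inv_le_one_of_one_le₀ (one_le_pow₀ ha)
  linarith

lemma integral_sineKernelSq_add_le_three {x N : ℝ} (hx : 0 ≤ x) (hN : 1 ≤ N) :
    ∫ u in x..x + N, sineKernelSq u ≤ 3 := by
  rw [← intervalIntegral.integral_add_adjacent_intervals (intervalIntegrable_sineKernelSq x (x + 1))
    (intervalIntegrable_sineKernelSq _ _)]
  have hnear : ∫ u in x..x + 1, sineKernelSq u ≤ 1 := by
    simpa using intervalIntegral.integral_mono_on (a := x) (b := x + 1) (by linarith)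
      (intervalIntegrable_sineKernelSq _ _) intervalIntegrable_const
      fun u _ => sineKernelSq_le_one u
  linarith [integral_sineKernelSq_le_two (a := x + 1) (b := x + N) (by linarith) (by linarith)]

lemma abs_integral_integral_sineKernelSq_zero_one_le {N : ℝ} (hN : 1 ≤ N) :
    |∫ x in 0..1, ∫ u in x..x + N, sineKernelSq u| ≤ 3 := by
  refine (intervalIntegral.norm_integral_le_of_norm_le_const (C := 3)
    (f := fun x => ∫ u in x..x + N, sineKernelSq u) fun x hx => ?_).trans_eq (by norm_num)
  rw [Set.uIoc_of_le zero_le_one] at hx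
  rw [Real.norm_eq_abs, abs_of_nonneg (intervalIntegral.integral_nonneg (by linarith)
    fun u _ => sineKernelSq_nonneg u)]
  exact integral_sineKernelSq_add_le_three hx.1.le hN

lemma integral_inv_sub_inv_add_eq_log {N : ℝ} (hN : 0 < N) :
    ∫ x in 1..N, (x⁻¹ - (x + N)⁻¹) = log ((N + 1) / 2) := by
  have hshift : ∫ x in 1..N, (x + N)⁻¹ = ∫ x in 1 + N..N + N, x⁻¹ :=
    intervalIntegral.integral_comp_add_right (fun x => x⁻¹) N
  have hpos : ∀ x ∈ Set.uIcc 1 N, 0 < x := fun x hx => (lt_min one_pos hN).trans_le hx.1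
  rw [intervalIntegral.integral_sub
      (intervalIntegral.intervalIntegrable_inv (fun x hx => (hpos x hx).ne') continuousOn_id)
      (intervalIntegral.intervalIntegrable_inv (fun x hx => by linarith [hpos x hx]) (by fun_prop)),
    hshift, integral_inv_of_pos one_pos hN, integral_inv_of_pos (by linarith) (by linarith),
    ← log_div (by positivity) (by positivity)]
  congr 1
  field_simp
  ring

lemma abs_log_sub_log_half_add_one_le {N : ℝ} (hN : 1 ≤ N) :
    |log N - log ((N + 1) / 2)| ≤ log 2 := by
  have hN0 : 0 < N := one_pos.trans_le hN
  rw [← log_div hN0.ne' (by positivity),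
    abs_of_nonneg (log_nonneg (by rw [le_div_iff₀ (by positivity)]; linarith))]
  exact log_le_log (by positivity) (by rw [div_le_iff₀ (by positivity)]; linarith)

lemma abs_integral_integral_sineKernelSq_sub_log_le {N : ℝ} (hN : 1 ≤ N) :
    |(∫ x in 1..N, ∫ u in x..x + N, sineKernelSq u) - log ((N + 1) / 2) / (2 * π ^ 2)| ≤ 1 := by
  have hN0 : 0 < N := one_pos.trans_le hN
  have hmain_int : IntervalIntegrable (fun x => (x⁻¹ - (x + N)⁻¹) / (2 * π ^ 2)) volume 1 N := by
    have hcont : ContinuousOn (fun x : ℝ => x⁻¹ - (x + N)⁻¹) (Set.Ioi 0) :=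
      (continuousOn_inv₀.mono fun _ hx => ne_of_gt hx).sub
        ((continuous_add_const N).continuousOn.inv₀ fun x hx => by linarith [Set.mem_Ioi.1 hx])
    exact intervalIntegrable_of_continuousOn_Ioi (hcont.div_const _) one_pos hN
  have hmain :
      ∫ x in 1..N, (x⁻¹ - (x + N)⁻¹) / (2 * π ^ 2) = log ((N + 1) / 2) / (2 * π ^ 2) := by
    rw [intervalIntegral.integral_div, integral_inv_sub_inv_add_eq_log hN0]
  rw [← hmain, ← intervalIntegral.integral_sub
    ((continuous_integral_sineKernelSq_add N).intervalIntegrable 1 N) hmain_int]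
  refine (intervalIntegral.norm_integral_le_of_norm_le hN
    (f := fun x => (∫ u in x..x + N, sineKernelSq u) - (x⁻¹ - (x + N)⁻¹) / (2 * π ^ 2))
    (g := fun x => (x ^ 2)⁻¹)
    (ae_of_all _ fun x hx => ?_)
    (intervalIntegrable_of_continuousOn_Ioi (continuousOn_inv_pow_Ioi 2) one_pos hN)).trans ?_
  · exact abs_integral_sineKernelSq_sub_le (one_pos.trans hx.1) (by linarith)
  · rw [integral_inv_pow_add_two 0 one_pos hN]
    norm_num
    positivity

/-- there is a constant `C` (independent of `N`) such that for all `N ≥ 1`,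
`|∫₀^N ∫₀^N sin²(π(x+y))/(π²(x+y)²) dx dy − (1/(2π²))·log N| ≤ C`;
in particular the double integral equals `(1/(2π²))·log N·(1+o(1))`. -/
theorem stmt1 :
    ∃ C : ℝ, ∀ N : ℝ, 1 ≤ N →
      |(∫ x in (0:ℝ)..N, ∫ y in (0:ℝ)..N,
          Real.sin (π * (x + y)) ^ 2 / (π ^ 2 * (x + y) ^ 2))
        - (1 / (2 * π ^ 2)) * Real.log N| ≤ C := by
  refine ⟨5, fun N hN => ?_⟩
  have hshift : ∀ x, ∫ y in (0:ℝ)..N, sin (π * (x + y)) ^ 2 / (π ^ 2 * (x + y) ^ 2)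
      = ∫ u in x..x + N, sineKernelSq u := fun x => by
    change ∫ y in (0:ℝ)..N, sineKernelSq (x + y) = _
    rw [intervalIntegral.integral_comp_add_left sineKernelSq x, add_zero]
  have hG := continuous_integral_sineKernelSq_add N
  simp only [hshift]
  rw [← intervalIntegral.integral_add_adjacent_intervals (hG.intervalIntegrable 0 1)
    (hG.intervalIntegrable 1 N)]
  have hnear := abs_integral_integral_sineKernelSq_zero_one_le hN
  have hfar := abs_integral_integral_sineKernelSq_sub_log_le hN
  have hlog : |log ((N + 1) / 2) / (2 * π ^ 2) - 1 / (2 * π ^ 2) * log N| ≤ 1 := by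
    have hπ : 1 ≤ 2 * π ^ 2 := by nlinarith [pi_gt_three]
    have e : log ((N + 1) / 2) / (2 * π ^ 2) - 1 / (2 * π ^ 2) * log N
        = -((log N - log ((N + 1) / 2)) / (2 * π ^ 2)) := by ring
    rw [e, abs_neg, abs_div, abs_of_pos (by positivity : (0:ℝ) < 2 * π ^ 2),
      div_le_one (by positivity)]
    linarith [abs_log_sub_log_half_add_one_le hN, log_two_lt_d9]
  obtain ⟨hnear₁, hnear₂⟩ := abs_le.1 hnear
  obtain ⟨hfar₁, hfar₂⟩ := abs_le.1 hfar
  obtain ⟨hlog₁, hlog₂⟩ := abs_le.1 hlog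
  exact abs_le.2 ⟨by linarith, by linarith⟩
end

section
/- Let A be a self-adjoint trace-class operator with 0 ≤ A ≤ 1 and let x ∈ ℝ with |e^x − 1| < 1. Then log det(1 + (e^x − 1)A) − x·Tr A = (x²/2)·Tr(A(1−A)) + R, where |R| ≤ C|x|³·Tr(A(1−A)) with a constant C depending only on a bound for |x|. -/
/-!
Write `u = 1 - e^x`. Expanding `log (1 - u t)` and `t log (1 - u)` in powers of `u`, their
difference is `∑ uⁿ (t - tⁿ) / n`, and `0 ≤ t - tⁿ ≤ (n - 1) t (1 - t)`: the `n = 2` term is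
`u²/2 · t(1 - t)` and the rest is at most `u³/(1 - u) · t(1 - t)`. For `x ∈ [-1, 0]` we have
`0 ≤ u ≤ |x|`, `u² - x² = O(|x|³)` and `1/(1 - u) = e^{-x} ≤ 3`. The substitution
`(x, t) ↦ (-x, 1 - t)` changes `log (1 + (e^x - 1) t)` only by the linear term `-x`, which reduces
`x > 0` to `x < 0`. Summing the resulting eigenvalue-wise bound gives the theorem with `C = 4`.
-/

open Finset Real

lemma self_sub_pow_succ_le {t : ℝ} (ht₀ : 0 ≤ t) (ht₁ : t ≤ 1) (n : ℕ) :
    t - t ^ (n + 1) ≤ n * (t * (1 - t)) := by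
  have hgeom : t - t ^ (n + 1) = t * (1 - t) * ∑ i ∈ range n, t ^ i := by
    rw [mul_assoc, mul_neg_geom_sum]; ring
  have hsum : ∑ i ∈ range n, t ^ i ≤ n := by
    simpa using sum_le_card_nsmul (range n) _ 1 fun i _ => pow_le_one₀ ht₀ ht₁
  rw [hgeom, mul_comm (n : ℝ)]
  exact mul_le_mul_of_nonneg_left hsum (mul_nonneg ht₀ (sub_nonneg.2 ht₁))

lemma hasSum_log_one_sub_mul_sub_mul_log {u t : ℝ} (hu₀ : 0 ≤ u) (hu₁ : u < 1)
    (ht₀ : 0 ≤ t) (ht₁ : t ≤ 1) :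
    HasSum (fun n : ℕ => u ^ (n + 1) * (t - t ^ (n + 1)) / (n + 1))
      (log (1 - u * t) - t * log (1 - u)) := by
  have hut : |u * t| < 1 := by
    rw [abs_of_nonneg (mul_nonneg hu₀ ht₀)]
    exact (mul_le_of_le_one_right hu₀ ht₁).trans_lt hu₁
  have hu : |u| < 1 := by rwa [abs_of_nonneg hu₀]
  have hterms : (fun n : ℕ => u ^ (n + 1) * (t - t ^ (n + 1)) / (n + 1))
      = fun n : ℕ => t * (u ^ (n + 1) / (n + 1)) - (u * t) ^ (n + 1) / (n + 1) := by
    funext n; rw [mul_pow]; ring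
  rw [hterms, show log (1 - u * t) - t * log (1 - u) = t * -log (1 - u) - -log (1 - u * t) by ring]
  exact ((hasSum_pow_div_log_of_abs_lt_one hu).mul_left t).sub
    (hasSum_pow_div_log_of_abs_lt_one hut)

lemma abs_log_one_sub_mul_sub_mul_log_sub_le {u t : ℝ} (hu₀ : 0 ≤ u) (hu₁ : u < 1)
    (ht₀ : 0 ≤ t) (ht₁ : t ≤ 1) :
    |log (1 - u * t) - t * log (1 - u) - u ^ 2 / 2 * (t * (1 - t))|
      ≤ u ^ 3 / (1 - u) * (t * (1 - t)) := by
  have hvar : 0 ≤ t * (1 - t) := mul_nonneg ht₀ (sub_nonneg.2 ht₁)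
  have htail := (hasSum_nat_add_iff' 2).2 (hasSum_log_one_sub_mul_sub_mul_log hu₀ hu₁ ht₀ ht₁)
  have hgeom := (hasSum_geometric_of_lt_one hu₀ hu₁).mul_left (u ^ 3 * (t * (1 - t)))
  simp only [sum_range_succ, sum_range_zero] at htail
  convert htail.norm_le_of_bounded hgeom fun n => ?_ using 1
  · rw [Real.norm_eq_abs]; congr 1; push_cast; ring
  · rw [div_eq_mul_inv]; ring
  · have hterm := self_sub_pow_succ_le ht₀ ht₁ (n + 2)
    have hpow : t ^ (n + 2 + 1) ≤ t := pow_le_of_le_one ht₀ ht₁ (by omega)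
    rw [Real.norm_eq_abs, abs_of_nonneg (by have := sub_nonneg.2 hpow; positivity),
      div_le_iff₀ (by positivity)]
    push_cast at hterm ⊢
    calc u ^ (n + 2 + 1) * (t - t ^ (n + 2 + 1)) ≤ u ^ (n + 2 + 1) * ((n + 2) * (t * (1 - t))) :=
          mul_le_mul_of_nonneg_left hterm (by positivity)
      _ ≤ u ^ 3 * (t * (1 - t)) * u ^ n * (n + 2 + 1) := by
          rw [show n + 2 + 1 = 3 + n by ring, pow_add]
          nlinarith [mul_nonneg (mul_nonneg (pow_nonneg hu₀ 3) (pow_nonneg hu₀ n)) hvar]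

lemma abs_log_one_add_exp_sub_one_mul_sub_le_of_nonpos {y t : ℝ} (hy₁ : -1 ≤ y) (hy₀ : y ≤ 0)
    (ht₀ : 0 ≤ t) (ht₁ : t ≤ 1) :
    |log (1 + (exp y - 1) * t) - y * t - y ^ 2 / 2 * (t * (1 - t))|
      ≤ 4 * |y| ^ 3 * (t * (1 - t)) := by
  set u := 1 - exp y
  have hvar : 0 ≤ t * (1 - t) := mul_nonneg ht₀ (sub_nonneg.2 ht₁)
  have hu₀ : 0 ≤ u := sub_nonneg.2 (exp_le_one_iff.2 hy₀)
  have hu_le : u ≤ -y := by linarith [add_one_le_exp y]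
  have hu_sub : -y - u ≤ y ^ 2 := by
    have := abs_exp_sub_one_sub_id_le (x := y) (by rwa [abs_of_nonpos hy₀, neg_le])
    linarith [le_abs_self (exp y - 1 - y)]
  have hAbs := abs_log_one_sub_mul_sub_mul_log_sub_le hu₀ (by linarith [exp_pos y]) ht₀ ht₁
  rw [show 1 - u = exp y by ring, log_exp, show 1 - u * t = 1 + (exp y - 1) * t by ring] at hAbs
  have hcubic : u ^ 3 / exp y ≤ 3 * |y| ^ 3 := by
    have hexp : (exp y)⁻¹ ≤ 3 := by
      rw [← exp_neg]
      linarith [exp_le_exp.2 (show -y ≤ 1 by linarith), exp_one_lt_d9]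
    rw [div_eq_mul_inv, abs_of_nonpos hy₀, mul_comm]
    exact mul_le_mul hexp (pow_le_pow_left₀ hu₀ hu_le 3) (by positivity) (by norm_num)
  have hquad : |u ^ 2 / 2 - y ^ 2 / 2| ≤ |y| ^ 3 := by
    rw [abs_of_nonpos hy₀, abs_of_nonpos (by nlinarith)]
    nlinarith
  calc |log (1 + (exp y - 1) * t) - y * t - y ^ 2 / 2 * (t * (1 - t))|
      = |(log (1 + (exp y - 1) * t) - t * y - u ^ 2 / 2 * (t * (1 - t)))
          + (u ^ 2 / 2 - y ^ 2 / 2) * (t * (1 - t))| := by ring_nf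
    _ ≤ u ^ 3 / exp y * (t * (1 - t)) + |y| ^ 3 * (t * (1 - t)) := by
        refine (abs_add_le _ _).trans (add_le_add hAbs ?_)
        rw [abs_mul, abs_of_nonneg hvar]
        exact mul_le_mul_of_nonneg_right hquad hvar
    _ ≤ 4 * |y| ^ 3 * (t * (1 - t)) := by nlinarith

lemma log_one_add_exp_neg_sub_one_mul_one_sub (x t : ℝ) (ht₀ : 0 ≤ t) (ht₁ : t ≤ 1) :
    log (1 + (exp (-x) - 1) * (1 - t)) = -x + log (1 + (exp x - 1) * t) := by
  have hpos : 0 < 1 + (exp x - 1) * t := by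
    rcases ht₁.lt_or_eq with ht | rfl
    · nlinarith [mul_nonneg ht₀ (exp_pos x).le]
    · simpa using exp_pos x
  rw [show 1 + (exp (-x) - 1) * (1 - t) = exp (-x) * (1 + (exp x - 1) * t) by
      rw [exp_neg]; field_simp; ring,
    log_mul (exp_pos _).ne' hpos.ne', log_exp]

lemma abs_log_one_add_exp_sub_one_mul_sub_le {x t : ℝ} (hx : |x| ≤ 1) (ht₀ : 0 ≤ t) (ht₁ : t ≤ 1) :
    |log (1 + (exp x - 1) * t) - x * t - x ^ 2 / 2 * (t * (1 - t))|
      ≤ 4 * |x| ^ 3 * (t * (1 - t)) := by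
  obtain ⟨hx₁, hx₂⟩ := abs_le.1 hx
  rcases le_total x 0 with hx₀ | hx₀
  · exact abs_log_one_add_exp_sub_one_mul_sub_le_of_nonpos hx₁ hx₀ ht₀ ht₁
  · have h := abs_log_one_add_exp_sub_one_mul_sub_le_of_nonpos (y := -x) (t := 1 - t)
      (by linarith) (by linarith) (by linarith) (by linarith)
    rw [log_one_add_exp_neg_sub_one_mul_one_sub x t ht₀ ht₁, abs_neg] at h
    convert h using 2 <;> ring

lemma abs_tsum_sub_mul_tsum_sub_mul_tsum_le {ι : Type*} {f a b g : ι → ℝ} {c d : ℝ}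
    (ha : Summable a) (hb : Summable b) (hg : Summable g)
    (h : ∀ i, |f i - c * a i - d * b i| ≤ g i) :
    |∑' i, f i - c * ∑' i, a i - d * ∑' i, b i| ≤ ∑' i, g i := by
  set r := fun i => f i - c * a i - d * b i
  have hr : Summable r := .of_norm_bounded hg h
  have hf : HasSum f (∑' i, r i + c * ∑' i, a i + d * ∑' i, b i) := by
    convert (hr.hasSum.add (ha.hasSum.mul_left c)).add (hb.hasSum.mul_left d) using 1
    funext i; simp only [r]; ring
  rw [hf.tsum_eq, show ∀ p q s : ℝ, p + q + s - q - s = p by intros; ring]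
  exact hr.hasSum.norm_le_of_bounded hg.hasSum h

/-- for a self-adjoint trace-class operator `A` with `0 ≤ A ≤ 1`,
described by its eigenvalue sequence `lam : ℕ → ℝ` with `lam k ∈ [0,1]` and
`∑ lam k < ∞`, and for `x` with `|e^x − 1| < 1` and `|x| ≤ 1`:
`log det(1+(e^x−1)A) − x·Tr A − (x²/2)·Tr(A(1−A))` is bounded by
`C|x|³·Tr(A(1−A))` with `C` depending only on the bound `1` for `|x|`. -/
theorem stmt6 :
    ∃ C : ℝ, 0 < C ∧ ∀ (lam : ℕ → ℝ), (∀ k, lam k ∈ Set.Icc (0:ℝ) 1) →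
      Summable lam → ∀ x : ℝ, |Real.exp x - 1| < 1 → |x| ≤ 1 →
      |(∑' k, Real.log (1 + (Real.exp x - 1) * lam k))
          - x * (∑' k, lam k) - (x ^ 2 / 2) * (∑' k, lam k * (1 - lam k))|
        ≤ C * |x| ^ 3 * (∑' k, lam k * (1 - lam k)) := by
  refine ⟨4, by norm_num, fun lam hlam hsum x _ hx => ?_⟩
  have hvar : Summable fun k => lam k * (1 - lam k) :=
    hsum.of_nonneg_of_le (fun k => mul_nonneg (hlam k).1 (sub_nonneg.2 (hlam k).2))
      fun k => mul_le_of_le_one_right (hlam k).1 (by linarith [(hlam k).1])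
  refine (abs_tsum_sub_mul_tsum_sub_mul_tsum_le hsum hvar (hvar.mul_left _) fun k => ?_).trans_eq
    tsum_mul_left
  exact abs_log_one_add_exp_sub_one_mul_sub_le hx (hlam k).1 (hlam k).2
end
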